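/- Let C be an extremal set in a finite simple connected graph Γ with antipodal set D. Then for every μ_l in the C-local spectrum, the C- and D-multiplicities satisfy m_C(μ_l)·m_D(μ_l) ≥ (π₀(C)²/π_l(C)²)·(‖ρC‖²·‖ρD‖²/‖ν‖⁴). -/

import Mathlib

open Finset Polynomial BigOperators
open scoped Classical

noncomputable section

/-- The eigenspace of a real matrix `A` (viewed as an operator on Euclidean space)
for the value `μ`. -/
def eigSp {n : ℕ} (A : Matrix (Fin n) (Fin n) ℝ) (μ : ℝ) :
    Submodule ℝ (EuclideanSpace ℝ (Fin n)) :=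
  Module.End.eigenspace (Matrix.toEuclideanLin A) μ

/-- Orthogonal projection onto the `μ`-eigenspace of `A`. -/
def eigProj {n : ℕ} (A : Matrix (Fin n) (Fin n) ℝ) (μ : ℝ) (v : EuclideanSpace ℝ (Fin n)) :
    EuclideanSpace ℝ (Fin n) :=
  ((eigSp A μ).orthogonalProjectionOnto v : EuclideanSpace ℝ (Fin n))

/-- The weighted characteristic vector `ρS = Σ_{i∈S} ν_i e_i`. -/
def rho {n : ℕ} (ν : EuclideanSpace ℝ (Fin n)) (S : Finset (Fin n)) :
    EuclideanSpace ℝ (Fin n) :=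
  WithLp.toLp 2 (fun i => if i ∈ S then ν i else 0)

/-- The unit vector `e_S = ρS / ‖ρS‖`. -/
def unitVec {n : ℕ} (ν : EuclideanSpace ℝ (Fin n)) (S : Finset (Fin n)) :
    EuclideanSpace ℝ (Fin n) :=
  (‖rho ν S‖)⁻¹ • rho ν S

/-- The `S`-local multiplicity of `μ`: `m_S(μ) = ‖E_μ e_S‖²`. -/
def mloc {n : ℕ} (A : Matrix (Fin n) (Fin n) ℝ) (ν : EuclideanSpace ℝ (Fin n))
    (S : Finset (Fin n)) (μ : ℝ) : ℝ :=
  ‖eigProj A μ (unitVec ν S)‖ ^ 2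

/-- The `S`-local spectrum: the set of `μ` whose eigenspace sees `ρS`. -/
def evloc {n : ℕ} (A : Matrix (Fin n) (Fin n) ℝ) (ν : EuclideanSpace ℝ (Fin n))
    (S : Finset (Fin n)) : Set ℝ :=
  {μ | eigProj A μ (rho ν S) ≠ 0}

/-- Distance from a vertex `i` to a set of vertices `S`. -/
def dSet {n : ℕ} (G : SimpleGraph (Fin n)) (S : Finset (Fin n)) (i : Fin n) : ℕ :=
  sInf {k | ∃ j ∈ S, G.dist i j = k}

/-- Eccentricity (covering radius) of a vertex set `S`. -/
def eccS {n : ℕ} (G : SimpleGraph (Fin n)) (S : Finset (Fin n)) : ℕ :=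
  Finset.univ.sup (dSet G S)

/-- The `k`-th subconstituent `S_k = {i : dist(i,S) = k}`. -/
def subcons {n : ℕ} (G : SimpleGraph (Fin n)) (S : Finset (Fin n)) (k : ℕ) :
    Finset (Fin n) :=
  Finset.univ.filter (fun i => dSet G S i = k)

/-- `p(A)·v` for a polynomial `p`, a matrix `A` and a Euclidean vector `v`. -/
def aevalVec {n : ℕ} (A : Matrix (Fin n) (Fin n) ℝ) (p : Polynomial ℝ)
    (v : EuclideanSpace ℝ (Fin n)) : EuclideanSpace ℝ (Fin n) :=
  WithLp.toLp 2 ((Polynomial.aeval A p).mulVec v)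

/-- Moment-like parameter `π_l = ∏_{h≠l} |μ_l − μ_h|` for an enumeration `μ`. -/
def piC {d : ℕ} (μ : Fin (d + 1) → ℝ) (l : Fin (d + 1)) : ℝ :=
  ∏ h ∈ Finset.univ.erase l, |μ l - μ h|

/-!
Let `Q_l = ∏_{h ≠ l} (X - μ_h)`, a monic polynomial of degree `d`. Since `ρC` has components only in
the eigenspaces of the `C`-local eigenvalues, `Q_l(A) ρC = Q_l(μ_l) E_{μ_l} ρC`. On the other hand
`(A^k)_{ji} = 0` for `j ∈ D`, `i ∈ C` and `k < d`, and `Q_0 - Q_l` has degree `< d`, so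
`⟪Q_0(A) ρC, ρD⟫ = ⟪Q_l(A) ρC, ρD⟫`. By Perron–Frobenius `μ_0 = λ₀` and `E_{λ₀}` is the projection
onto `ν`, which turns the left side into `±π₀ ‖ρC‖² ‖ρD‖² / ‖ν‖²`; the right side is at most
`π_l ‖E_{μ_l} ρC‖ ‖E_{μ_l} ρD‖` in absolute value by Cauchy–Schwarz. Squaring gives the claim.
-/

open scoped RealInnerProductSpace

namespace LinearMap.IsSymmetric

open Module.End

variable {𝕜 E : Type*} [RCLike 𝕜] [NormedAddCommGroup E] [InnerProductSpace 𝕜 E]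
  [FiniteDimensional 𝕜 E] {T : E →ₗ[𝕜] E}

theorem sum_starProjection_eigenspace_eq_self (hT : T.IsSymmetric) {s : Finset 𝕜} {v : E}
    (hs : ∀ μ ∉ s, (eigenspace T μ).starProjection v = 0) :
    ∑ μ ∈ s, (eigenspace T μ).starProjection v = v := by
  have hproj : ∀ μ κ, (eigenspace T μ).starProjection ((eigenspace T κ).starProjection v) =
      if μ = κ then (eigenspace T μ).starProjection v else 0 := by
    intro μ κ
    split_ifs with h
    · rw [h, Submodule.starProjection_eq_self_iff]
      exact Submodule.starProjection_apply_mem _ v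
    · exact (Submodule.starProjection_apply_eq_zero_iff _).2 <|
        hT.orthogonalFamily_eigenspaces.isOrtho (Ne.symm h) (Submodule.starProjection_apply_mem _ v)
  suffices v - ∑ μ ∈ s, (eigenspace T μ).starProjection v = 0 from (sub_eq_zero.1 this).symm
  rw [← Submodule.mem_bot 𝕜, ← hT.orthogonalComplement_iSup_eigenspaces_eq_bot,
    ← Submodule.iInf_orthogonal, Submodule.mem_iInf]
  intro μ
  rw [← Submodule.starProjection_apply_eq_zero_iff, map_sub, map_sum]
  simp only [hproj, Finset.sum_ite_eq]
  split_ifs with h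
  · exact sub_self _
  · rw [sub_zero, hs μ h]

theorem aeval_apply_eq_sum (hT : T.IsSymmetric) {s : Finset 𝕜} {v : E}
    (hs : ∀ μ ∉ s, (eigenspace T μ).starProjection v = 0) (p : 𝕜[X]) :
    aeval T p v = ∑ μ ∈ s, p.eval μ • (eigenspace T μ).starProjection v := by
  conv_lhs => rw [← hT.sum_starProjection_eigenspace_eq_self hs, map_sum]
  exact Finset.sum_congr rfl fun μ _ => aeval_apply_of_mem_apply_eq_smul <|
    mem_eigenspace_iff.1 (Submodule.starProjection_apply_mem _ v)


theorem aeval_nodal_erase_apply (hT : T.IsSymmetric) {ι : Type*} [Fintype ι] [DecidableEq ι]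
    {μ : ι → 𝕜} {v : E} (hv : ∀ κ ∉ Set.range μ, (eigenspace T κ).starProjection v = 0)
    (k : ι) :
    aeval T (Lagrange.nodal (univ.erase k) μ) v =
      (Lagrange.nodal (univ.erase k) μ).eval (μ k) • (eigenspace T (μ k)).starProjection v := by
  rw [hT.aeval_apply_eq_sum (s := univ.image μ) (by simpa using hv),
    Finset.sum_eq_single_of_mem _ (mem_image_of_mem μ (mem_univ k))]
  rintro _ hκ hne
  obtain ⟨h, -, rfl⟩ := mem_image.1 hκ
  have hh : h ∈ univ.erase k := mem_erase.2 ⟨by rintro rfl; exact hne rfl, mem_univ h⟩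
  rw [Lagrange.eval_nodal_at_node hh, zero_smul]

end LinearMap.IsSymmetric

section Perron

variable {V : Type*} [Fintype V]

open Matrix

theorem Matrix.abs_le_of_mulVec_eq_smul_of_pos {A : Matrix V V ℝ} (hsymm : A.IsSymm)
    (hA : ∀ i j, 0 ≤ A i j) {ν u : V → ℝ} {r κ : ℝ} (hν : ∀ i, 0 < ν i)
    (hAν : A *ᵥ ν = r • ν) (hAu : A *ᵥ u = κ • u) (hu : u ≠ 0) : |κ| ≤ r := by
  set a : V → ℝ := fun i => |u i|
  have hpoint : ∀ i, |κ| * a i ≤ (A *ᵥ a) i := fun i =>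
    calc |κ| * a i = |(A *ᵥ u) i| := by rw [hAu]; simp [a, abs_mul]
      _ ≤ ∑ j, |A i j * u j| := Finset.abs_sum_le_sum_abs _ _
      _ = (A *ᵥ a) i := by simp [a, mulVec, dotProduct, abs_mul, abs_of_nonneg (hA _ _)]
  have hpos : 0 < ν ⬝ᵥ a := by
    obtain ⟨i, hi⟩ := Function.ne_iff.1 hu
    exact Finset.sum_pos' (fun j _ => mul_nonneg (hν j).le (abs_nonneg _))
      ⟨i, mem_univ i, mul_pos (hν i) (abs_pos.2 hi)⟩
  refine le_of_mul_le_mul_right ?_ hpos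
  calc |κ| * (ν ⬝ᵥ a) = ν ⬝ᵥ (|κ| • a) := by rw [dotProduct_smul, smul_eq_mul]
    _ ≤ ν ⬝ᵥ (A *ᵥ a) := Finset.sum_le_sum fun i _ =>
        mul_le_mul_of_nonneg_left (hpoint i) (hν i).le
    _ = (A *ᵥ ν) ⬝ᵥ a := by rw [dotProduct_mulVec, ← mulVec_transpose, hsymm.eq]
    _ = r * (ν ⬝ᵥ a) := by rw [hAν, smul_dotProduct, smul_eq_mul]

variable {G : SimpleGraph V} [DecidableRel G.Adj]

theorem SimpleGraph.Connected.eq_zero_of_adjMatrix_mulVec_eq_smul (hG : G.Connected)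
    {w : V → ℝ} {r : ℝ} (hw : 0 ≤ w) (hAw : G.adjMatrix ℝ *ᵥ w = r • w) {x : V}
    (hx : w x = 0) : w = 0 := by
  have hstep : ∀ y z, G.Adj y z → w y = 0 → w z = 0 := fun y z hyz hy =>
    (Finset.sum_eq_zero_iff_of_nonneg fun u _ => hw u).1
      (by rw [← G.adjMatrix_mulVec_apply, hAw, Pi.smul_apply, hy, smul_zero]) z
      ((G.mem_neighborFinset y z).2 hyz)
  have hwalk : ∀ y z (p : G.Walk y z), w y = 0 → w z = 0 := by
    intro y z p
    induction p with
    | nil => exact id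
    | cons h _ ih => exact fun hy => ih (hstep _ _ h hy)
  funext z
  exact hwalk x z (hG.preconnected x z).some hx

theorem SimpleGraph.Connected.eq_smul_of_adjMatrix_mulVec_eq_smul (hG : G.Connected)
    {ν u : V → ℝ} {r : ℝ} (hν : ∀ i, 0 < ν i) (hAν : G.adjMatrix ℝ *ᵥ ν = r • ν)
    (hAu : G.adjMatrix ℝ *ᵥ u = r • u) : ∃ c : ℝ, u = c • ν := by
  obtain ⟨i₀, -, hi₀⟩ := Finset.exists_min_image univ (fun i => u i / ν i)
    (univ_nonempty_iff.2 hG.nonempty)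
  set c := u i₀ / ν i₀
  refine ⟨c, sub_eq_zero.1 (hG.eq_zero_of_adjMatrix_mulVec_eq_smul (r := r) ?_ ?_ (x := i₀) ?_)⟩
  · intro i
    have := (le_div_iff₀ (hν i)).1 (hi₀ i (mem_univ i))
    simp only [Pi.zero_apply, Pi.sub_apply, Pi.smul_apply, smul_eq_mul]
    linarith
  · rw [mulVec_sub, mulVec_smul, hAu, hAν, smul_sub, smul_comm]
  · simp [c, div_mul_cancel₀ _ (hν i₀).ne']

end Perron

section EuclideanSpace

variable {n : ℕ}

open Matrix Module.End

theorem mem_eigSp_iff {A : Matrix (Fin n) (Fin n) ℝ} {κ : ℝ} {u : EuclideanSpace ℝ (Fin n)} :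
    u ∈ eigSp A κ ↔ A *ᵥ u.ofLp = κ • u.ofLp := by
  rw [eigSp, mem_eigenspace_iff, ← (WithLp.ofLp_injective 2).eq_iff]
  rfl

theorem eigProj_eq_starProjection (A : Matrix (Fin n) (Fin n) ℝ) (κ : ℝ)
    (v : EuclideanSpace ℝ (Fin n)) :
    eigProj A κ v = (eigenspace (toEuclideanLin A) κ).starProjection v :=
  rfl

theorem inner_eigProj_left_eq_inner_eigProj (A : Matrix (Fin n) (Fin n) ℝ) (κ : ℝ)
    (u v : EuclideanSpace ℝ (Fin n)) :
    ⟪eigProj A κ u, v⟫ = ⟪eigProj A κ u, eigProj A κ v⟫ := by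
  simp only [eigProj_eq_starProjection]
  conv_lhs =>
    rw [← Submodule.starProjection_eq_self_iff.2 (Submodule.starProjection_apply_mem _ u)]
  exact Submodule.inner_starProjection_left_eq_right _ _ _

theorem aeval_toEuclideanLin (A : Matrix (Fin n) (Fin n) ℝ) (p : ℝ[X]) :
    aeval (toEuclideanLin A) p = toEuclideanLin (aeval A p) :=
  aeval_algHom_apply (toLpLinAlgEquiv (R := ℝ) (n := Fin n) 2) A p

theorem inner_rho_eq_norm_sq (ν : EuclideanSpace ℝ (Fin n)) (S : Finset (Fin n)) :
    ⟪ν, rho ν S⟫ = ‖rho ν S‖ ^ 2 := by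
  rw [← real_inner_self_eq_norm_sq]
  simp only [PiLp.inner_apply, rho]
  refine Finset.sum_congr rfl fun i _ => ?_
  split_ifs <;> simp

theorem inner_toEuclideanLin_rho_eq_zero {M : Matrix (Fin n) (Fin n) ℝ}
    (ν : EuclideanSpace ℝ (Fin n)) {S T : Finset (Fin n)} (hM : ∀ i ∈ S, ∀ j ∈ T, M j i = 0) :
    ⟪toEuclideanLin M (rho ν S), rho ν T⟫ = 0 := by
  simp only [PiLp.inner_apply, rho, toLpLin_apply, mulVec, dotProduct]
  refine Finset.sum_eq_zero fun j _ => ?_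
  split_ifs with hj
  · have : ∑ i ∈ S, M j i * ν i = 0 :=
      Finset.sum_eq_zero fun i hi => by rw [hM i hi j hj, zero_mul]
    simp [this]
  · simp

theorem mloc_eq_div (A : Matrix (Fin n) (Fin n) ℝ) (ν : EuclideanSpace ℝ (Fin n))
    (S : Finset (Fin n)) (κ : ℝ) :
    mloc A ν S κ = ‖eigProj A κ (rho ν S)‖ ^ 2 / ‖rho ν S‖ ^ 2 := by
  rw [mloc, unitVec, eigProj_eq_starProjection, map_smul, norm_smul, mul_pow, norm_inv,
    norm_norm, inv_pow, ← div_eq_inv_mul, eigProj_eq_starProjection]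

variable {G : SimpleGraph (Fin n)} [DecidableRel G.Adj] {ν : EuclideanSpace ℝ (Fin n)} {r : ℝ}

theorem eigSp_adjMatrix_eq_span (hG : G.Connected) (hν : ∀ i, 0 < ν i)
    (hPerron : (G.adjMatrix ℝ).mulVec ν = r • ν) : eigSp (G.adjMatrix ℝ) r = ℝ ∙ ν := by
  refine le_antisymm (fun u hu => ?_) ((Submodule.span_singleton_le_iff_mem _ _).2
    (mem_eigSp_iff.2 hPerron))
  obtain ⟨c, hc⟩ := hG.eq_smul_of_adjMatrix_mulVec_eq_smul hν hPerron (mem_eigSp_iff.1 hu)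
  exact Submodule.mem_span_singleton.2 ⟨c, (WithLp.ofLp_injective 2 hc).symm⟩

theorem eigProj_adjMatrix_perron (hG : G.Connected) (hν : ∀ i, 0 < ν i)
    (hPerron : (G.adjMatrix ℝ).mulVec ν = r • ν) (v : EuclideanSpace ℝ (Fin n)) :
    eigProj (G.adjMatrix ℝ) r v = (⟪ν, v⟫ / ‖ν‖ ^ 2) • ν := by
  simp only [eigProj, ← Submodule.starProjection_apply, eigSp_adjMatrix_eq_span hG hν hPerron,
    Submodule.starProjection_singleton]
  rfl

theorem le_of_eigProj_adjMatrix_ne_zero (hν : ∀ i, 0 < ν i)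
    (hPerron : (G.adjMatrix ℝ).mulVec ν = r • ν) {κ : ℝ} {v : EuclideanSpace ℝ (Fin n)}
    (h : eigProj (G.adjMatrix ℝ) κ v ≠ 0) : κ ≤ r :=
  (le_abs_self κ).trans <| abs_le_of_mulVec_eq_smul_of_pos G.isSymm_adjMatrix
    (fun i j => by by_cases hij : G.Adj i j <;> simp [hij]) hν hPerron
    (mem_eigSp_iff.1 (Submodule.starProjection_apply_mem _ v))
    ((WithLp.ofLp_injective 2).ne h)

end EuclideanSpace

namespace SimpleGraph

variable {V R : Type*} [Fintype V] [DecidableEq V] {G : SimpleGraph V} [DecidableRel G.Adj]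

theorem adjMatrix_pow_apply_eq_zero_of_lt_dist [Semiring R] {k : ℕ} {i j : V}
    (h : k < G.dist i j) : (G.adjMatrix R ^ k) i j = 0 := by
  rw [adjMatrix_pow_apply_eq_card_walk,
    Fintype.card_eq_zero_iff.2 ⟨fun ⟨p, hp⟩ => (hp ▸ G.dist_le p).not_gt h⟩, Nat.cast_zero]

theorem aeval_adjMatrix_apply_eq_zero_of_degree_lt_dist [CommRing R] {p : R[X]} {i j : V}
    (h : p.degree < G.dist i j) : aeval (G.adjMatrix R) p i j = 0 := by
  rw [aeval_eq_sum_range, Matrix.sum_apply]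
  refine Finset.sum_eq_zero fun k _ => ?_
  by_cases hk : p.coeff k = 0
  · simp [hk]
  · rw [Matrix.smul_apply, adjMatrix_pow_apply_eq_zero_of_lt_dist, smul_zero]
    exact_mod_cast (le_degree_of_ne_zero hk).trans_lt h

end SimpleGraph

section Subconstituent

variable {n : ℕ} {G : SimpleGraph (Fin n)}

theorem le_dist_of_mem_subcons {C : Finset (Fin n)} {d : ℕ} {i j : Fin n} (hi : i ∈ C)
    (hj : j ∈ subcons G C d) : d ≤ G.dist j i :=
  (mem_filter.1 hj).2 ▸ Nat.sInf_le ⟨i, hi, rfl⟩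

theorem inner_aeval_rho_subcons_eq_zero [DecidableRel G.Adj] (ν : EuclideanSpace ℝ (Fin n))
    (C : Finset (Fin n)) {d : ℕ} {p : ℝ[X]} (hp : p.degree < d) :
    ⟪aeval (Matrix.toEuclideanLin (G.adjMatrix ℝ)) p (rho ν C), rho ν (subcons G C d)⟫ = 0 := by
  rw [aeval_toEuclideanLin]
  exact inner_toEuclideanLin_rho_eq_zero ν fun i hi j hj =>
    G.aeval_adjMatrix_apply_eq_zero_of_degree_lt_dist
      (hp.trans_le (by exact_mod_cast le_dist_of_mem_subcons hi hj))

end Subconstituent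

theorem piC_eq_abs_eval_nodal {d : ℕ} (μ : Fin (d + 1) → ℝ) (l : Fin (d + 1)) :
    piC μ l = |(Lagrange.nodal (univ.erase l) μ).eval (μ l)| := by
  rw [piC, Lagrange.eval_nodal, Finset.abs_prod]

theorem piC_nonneg {d : ℕ} (μ : Fin (d + 1) → ℝ) (l : Fin (d + 1)) : 0 ≤ piC μ l :=
  Finset.prod_nonneg fun _ _ => abs_nonneg _

section LocalSpectrum

variable {n d : ℕ} {G : SimpleGraph (Fin n)} [DecidableRel G.Adj] {ν : EuclideanSpace ℝ (Fin n)}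
  {C : Finset (Fin n)} {μ : Fin (d + 1) → ℝ}

theorem eval_nodal_mul_inner_eigProj_eq (hμr : Set.range μ = evloc (G.adjMatrix ℝ) ν C)
    (k l : Fin (d + 1)) :
    (Lagrange.nodal (univ.erase k) μ).eval (μ k) *
        ⟪eigProj (G.adjMatrix ℝ) (μ k) (rho ν C), rho ν (subcons G C d)⟫ =
      (Lagrange.nodal (univ.erase l) μ).eval (μ l) *
        ⟪eigProj (G.adjMatrix ℝ) (μ l) (rho ν C), rho ν (subcons G C d)⟫ := by
  set Q : Fin (d + 1) → ℝ[X] := fun k => Lagrange.nodal (univ.erase k) μ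
  have hT : (Matrix.toEuclideanLin (G.adjMatrix ℝ)).IsSymmetric :=
    Matrix.isSymmetric_toEuclideanLin_iff.2 (G.isHermitian_adjMatrix ℝ)
  have hQ : ∀ k, aeval (Matrix.toEuclideanLin (G.adjMatrix ℝ)) (Q k) (rho ν C) =
      (Q k).eval (μ k) • eigProj (G.adjMatrix ℝ) (μ k) (rho ν C) :=
    hT.aeval_nodal_erase_apply fun κ hκ => not_not.1 fun h => hκ (hμr ▸ h)
  have hdegQ : ∀ k, (Q k).degree = d := fun k => by
    simp [Q, Lagrange.degree_nodal, card_erase_of_mem]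
  have hdeg : (Q k - Q l).degree < d := hdegQ k ▸ degree_sub_lt_left (by rw [hdegQ, hdegQ])
    Lagrange.nodal_monic.ne_zero
    (by rw [Lagrange.nodal_monic.leadingCoeff, Lagrange.nodal_monic.leadingCoeff])
  have h := inner_aeval_rho_subcons_eq_zero (G := G) ν C hdeg
  rwa [map_sub, LinearMap.sub_apply, inner_sub_left, sub_eq_zero, hQ, hQ, real_inner_smul_left,
    real_inner_smul_left] at h

theorem apply_zero_eq_perron_of_range_eq_evloc (hG : G.Connected) (hν : ∀ i, 0 < ν i)
    {r : ℝ} (hPerron : (G.adjMatrix ℝ).mulVec ν = r • ν) (hμa : StrictAnti μ)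
    (hμr : Set.range μ = evloc (G.adjMatrix ℝ) ν C) : μ 0 = r := by
  have hμ : ∀ k, eigProj (G.adjMatrix ℝ) (μ k) (rho ν C) ≠ 0 := fun k =>
    (hμr ▸ Set.mem_range_self k : μ k ∈ evloc (G.adjMatrix ℝ) ν C)
  have hρ : rho ν C ≠ 0 := fun h => hμ 0 (by rw [h, eigProj_eq_starProjection, map_zero])
  have hν0 : ν ≠ 0 := fun h => (hν hG.nonempty.some).ne' (by simp [h])
  obtain ⟨k, rfl⟩ : r ∈ Set.range μ := by
    rw [hμr]
    change eigProj _ r _ ≠ 0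
    rw [eigProj_adjMatrix_perron hG hν hPerron, inner_rho_eq_norm_sq]
    exact smul_ne_zero (by positivity) hν0
  exact le_antisymm (le_of_eigProj_adjMatrix_ne_zero hν hPerron (hμ 0))
    (hμa.antitone (Fin.zero_le k))

end LocalSpectrum

-- If `πₗ`, `x`, `y` or `w` vanishes, the left side is `0` because `a / 0 = 0`.
theorem sq_div_sq_mul_le_of_mul_le {π₀ πₗ a b x y w : ℝ} (hπ₀ : 0 ≤ π₀)
    (h : π₀ * (x ^ 2 / w ^ 2 * y ^ 2) ≤ πₗ * (a * b)) :
    π₀ ^ 2 / πₗ ^ 2 * (x ^ 2 * y ^ 2 / w ^ 4) ≤ a ^ 2 / x ^ 2 * (b ^ 2 / y ^ 2) := by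
  by_cases h0 : πₗ = 0 ∨ x = 0 ∨ y = 0 ∨ w = 0
  · have : π₀ ^ 2 / πₗ ^ 2 * (x ^ 2 * y ^ 2 / w ^ 4) = 0 := by
      rcases h0 with rfl | rfl | rfl | rfl <;> simp
    rw [this]
    positivity
  · obtain ⟨hπₗ, hx, hy, hw⟩ : πₗ ≠ 0 ∧ x ≠ 0 ∧ y ≠ 0 ∧ w ≠ 0 := by tauto
    have hsq := pow_le_pow_left₀ (by positivity) h 2
    calc π₀ ^ 2 / πₗ ^ 2 * (x ^ 2 * y ^ 2 / w ^ 4)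
        = (π₀ * (x ^ 2 / w ^ 2 * y ^ 2)) ^ 2 / (πₗ * x * y) ^ 2 := by field_simp
      _ ≤ (πₗ * (a * b)) ^ 2 / (πₗ * x * y) ^ 2 := div_le_div_of_nonneg_right hsq (sq_nonneg _)
      _ = a ^ 2 / x ^ 2 * (b ^ 2 / y ^ 2) := by field_simp

theorem multiplicity_product_inequality_general {n : ℕ} (G : SimpleGraph (Fin n)) [DecidableRel G.Adj]
    (hconn : G.Connected)
    (ν : EuclideanSpace ℝ (Fin n)) (hν : ∀ i, 0 < ν i) (lam0 : ℝ)
    (hPerron : (G.adjMatrix ℝ).mulVec ν = lam0 • ν)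
    (C : Finset (Fin n))
    (d : ℕ) (μ : Fin (d + 1) → ℝ) (hμa : StrictAnti μ)
    (hμr : Set.range μ = evloc (G.adjMatrix ℝ) ν C)
    (hext : eccS G C = d) :
    ∀ l : Fin (d + 1),
      (piC μ 0) ^ 2 / (piC μ l) ^ 2 *
        (‖rho ν C‖ ^ 2 * ‖rho ν (subcons G C (eccS G C))‖ ^ 2 / ‖ν‖ ^ 4)
      ≤ mloc (G.adjMatrix ℝ) ν C (μ l) *
          mloc (G.adjMatrix ℝ) ν (subcons G C (eccS G C)) (μ l) := by
  intro l
  rw [hext, mloc_eq_div, mloc_eq_div]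
  set A := G.adjMatrix ℝ
  set ρC := rho ν C
  set ρD := rho ν (subcons G C d)
  have hμ0 := apply_zero_eq_perron_of_range_eq_evloc hconn hν hPerron hμa hμr
  have key := eval_nodal_mul_inner_eigProj_eq hμr 0 l
  rw [hμ0, eigProj_adjMatrix_perron hconn hν hPerron, real_inner_smul_left,
    inner_rho_eq_norm_sq, inner_rho_eq_norm_sq] at key
  refine sq_div_sq_mul_le_of_mul_le (piC_nonneg μ 0) ?_
  calc piC μ 0 * (‖ρC‖ ^ 2 / ‖ν‖ ^ 2 * ‖ρD‖ ^ 2)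
      = |(Lagrange.nodal (univ.erase 0) μ).eval lam0 * (‖ρC‖ ^ 2 / ‖ν‖ ^ 2 * ‖ρD‖ ^ 2)| := by
        rw [abs_mul, abs_of_nonneg (a := _ * _) (by positivity), piC_eq_abs_eval_nodal, hμ0]
    _ = piC μ l * |⟪eigProj A (μ l) ρC, eigProj A (μ l) ρD⟫| := by
        rw [key, abs_mul, piC_eq_abs_eval_nodal, inner_eigProj_left_eq_inner_eigProj]
    _ ≤ piC μ l * (‖eigProj A (μ l) ρC‖ * ‖eigProj A (μ l) ρD‖) :=
        mul_le_mul_of_nonneg_left (abs_real_inner_le_norm _ _) (piC_nonneg μ l)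

theorem multiplicity_product_inequality {n : ℕ} (hn : 0 < n) (G : SimpleGraph (Fin n)) [DecidableRel G.Adj]
    (hconn : G.Connected)
    (ν : EuclideanSpace ℝ (Fin n)) (hν : ∀ i, 0 < ν i) (lam0 : ℝ)
    (hPerron : (G.adjMatrix ℝ).mulVec ν = lam0 • ν)
    (C : Finset (Fin n)) (hC : C.Nonempty)
    (d : ℕ) (μ : Fin (d + 1) → ℝ) (hμa : StrictAnti μ)
    (hμr : Set.range μ = evloc (G.adjMatrix ℝ) ν C)
    (hext : eccS G C = d) :
    ∀ l : Fin (d + 1),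
      (piC μ 0) ^ 2 / (piC μ l) ^ 2 *
        (‖rho ν C‖ ^ 2 * ‖rho ν (subcons G C (eccS G C))‖ ^ 2 / ‖ν‖ ^ 4)
      ≤ mloc (G.adjMatrix ℝ) ν C (μ l) *
          mloc (G.adjMatrix ℝ) ν (subcons G C (eccS G C)) (μ l) :=
  multiplicity_product_inequality_general G hconn ν hν lam0 hPerron C d μ hμa hμr hext
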